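/- With the Heisenberg-Greiner fields and gauge $N$ as above and homogeneous dimension $Q=2d+2\delta$, for every smooth $f:(0,\infty)\to\mathbb{R}$ the sub-Laplacian $\Delta_{\mathcal{X}}=\sum_{j=1}^{2d}X_j^2$ satisfies, at points with $N\neq 0$, $r\neq 0$: $\Delta_{\mathcal{X}}f(N) = \frac{r^{2(2\delta-1)}}{N^{2(2\delta-1)}}\Big(f''(N) + \frac{Q-1}{N}f'(N)\Big)$. In particular $\Delta_{\mathcal{X}}(N^{2-Q}) = 0$ away from the center set. -/

import Mathlib

noncomputable section

/-- `r = |x|` for a point `p = (x, t) ∈ ℝ^{2d} × ℝ`. -/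
def rHG {d : ℕ} (p : (Fin (2 * d) → ℝ) × ℝ) : ℝ := Real.sqrt (∑ j, p.1 j ^ 2)

/-- Heisenberg–Greiner gauge `N = (r^{4δ} + t²)^{1/(4δ)}`. -/
def NHG {d : ℕ} (δ : ℕ) (p : (Fin (2 * d) → ℝ) × ℝ) : ℝ :=
  (rHG p ^ (4 * δ) + p.2 ^ 2) ^ (1 / (4 * (δ : ℝ)))

/-- Coefficient of `∂_t` in the Heisenberg–Greiner field indexed by `j`. -/
def HGcoef {d : ℕ} (δ : ℕ) (j : Fin (2 * d)) (p : (Fin (2 * d) → ℝ) × ℝ) : ℝ :=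
  if h : (j : ℕ) < d then
    2 * (δ : ℝ) * p.1 ⟨(j : ℕ) + d, by omega⟩ * rHG p ^ (2 * δ - 2)
  else
    -(2 * (δ : ℝ) * p.1 ⟨(j : ℕ) - d, by have := j.isLt; omega⟩ * rHG p ^ (2 * δ - 2))

/-- Derivative of `u` along the `j`-th Heisenberg–Greiner field. -/
def XHG {d : ℕ} (δ : ℕ) (j : Fin (2 * d)) (u : (Fin (2 * d) → ℝ) × ℝ → ℝ)
    (p : (Fin (2 * d) → ℝ) × ℝ) : ℝ :=
  deriv (fun s => u (Function.update p.1 j s, p.2)) (p.1 j)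
    + HGcoef δ j p * deriv (fun s => u (p.1, s)) p.2

/-- Heisenberg–Greiner sub-Laplacian `Δ_𝒳 u = ∑_{j=1}^{2d} X_j(X_j u)`. -/
def DeltaHG {d : ℕ} (δ : ℕ) (u : (Fin (2 * d) → ℝ) × ℝ → ℝ)
    (p : (Fin (2 * d) → ℝ) × ℝ) : ℝ :=
  ∑ j, XHG δ j (XHG δ j u) p

namespace S18
open Real Finset Function

variable {d : ℕ}

def rsq (q : (Fin (2 * d) → ℝ) × ℝ) : ℝ := ∑ j, q.1 j ^ 2

def Af (m : ℕ) (q : (Fin (2 * d) → ℝ) × ℝ) : ℝ := rsq q ^ (2 * m) + q.2 ^ 2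

def al (e : ℕ) : ℝ := 1 / (4 * ((e : ℝ) + 1))

def yc (j : Fin (2 * d)) (x : Fin (2 * d) → ℝ) : ℝ :=
  if h : (j : ℕ) < d then x ⟨(j : ℕ) + d, by omega⟩
  else -(x ⟨(j : ℕ) - d, by have := j.isLt; omega⟩)

def G (e : ℕ) (j : Fin (2 * d)) (q : (Fin (2 * d) → ℝ) × ℝ) : ℝ :=
  Af (e + 1) q ^ (al e - 1) * rsq q ^ e * (q.1 j * rsq q ^ (e + 1) + yc j q.1 * q.2)

lemma rsq_nonneg (q : (Fin (2 * d) → ℝ) × ℝ) : 0 ≤ rsq q :=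
  Finset.sum_nonneg fun _ _ => sq_nonneg _

lemma rHG_pow_even (q : (Fin (2 * d) → ℝ) × ℝ) (k : ℕ) : rHG q ^ (2 * k) = rsq q ^ k := by
  rw [pow_mul, show rHG q = Real.sqrt (rsq q) from rfl, Real.sq_sqrt (rsq_nonneg q)]

lemma NHG_eq (e : ℕ) (q : (Fin (2 * d) → ℝ) × ℝ) :
    NHG (e + 1) q = Af (e + 1) q ^ (al e) := by
  have h4 : 4 * (e + 1) = 2 * (2 * (e + 1)) := by ring
  rw [NHG, h4, rHG_pow_even, Af, al]
  push_cast
  norm_num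

lemma rsq_pos (q : (Fin (2 * d) → ℝ) × ℝ) (hq : rsq q ≠ 0) : 0 < rsq q :=
  lt_of_le_of_ne (rsq_nonneg q) (Ne.symm hq)

lemma Af_pos (e : ℕ) (q : (Fin (2 * d) → ℝ) × ℝ) (hq : rsq q ≠ 0) : 0 < Af (e + 1) q :=
  add_pos_of_pos_of_nonneg (pow_pos (rsq_pos q hq) _) (sq_nonneg _)

lemma NHG_pos (e : ℕ) (q : (Fin (2 * d) → ℝ) × ℝ) (hq : rsq q ≠ 0) : 0 < NHG (e + 1) q := by
  rw [NHG_eq]; exact Real.rpow_pos_of_pos (Af_pos e q hq) _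

lemma HGcoef_eq (e : ℕ) (j : Fin (2 * d)) (q : (Fin (2 * d) → ℝ) × ℝ) :
    HGcoef (e + 1) j q = 2 * ((e : ℝ) + 1) * yc j q.1 * rsq q ^ e := by
  have h2 : 2 * (e + 1) - 2 = 2 * e := by omega
  rw [HGcoef, yc]
  split
  · rw [h2, rHG_pow_even]; push_cast; ring
  · rw [h2, rHG_pow_even]; push_cast; ring

lemma yc_update (j : Fin (2 * d)) (x : Fin (2 * d) → ℝ) (s : ℝ) :
    yc j (Function.update x j s) = yc j x := by
  have hd : 0 < d := by have := j.isLt; omega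
  rw [yc, yc]
  split
  · next h => rw [Function.update_of_ne (by simp [Fin.ext_iff]; omega)]
  · next h => rw [Function.update_of_ne (by simp [Fin.ext_iff]; have := j.isLt; omega)]

lemma sum_split (g : Fin (2 * d) → ℝ) :
    ∑ j, g j = ∑ i : Fin d, (g ⟨(i : ℕ), by omega⟩ + g ⟨(i : ℕ) + d, by omega⟩) := by
  have h2 : 2 * d = d + d := by ring
  rw [Fintype.sum_equiv (finCongr h2) g (fun j => g (Fin.cast h2.symm j))
    (fun i => by congr 1)]
  rw [Fin.sum_univ_add, ← Finset.sum_add_distrib]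
  refine Finset.sum_congr rfl fun i _ => ?_
  congr 1 <;> exact congrArg g (Fin.ext (by simp [Nat.add_comm]))

lemma yc_lo (x : Fin (2 * d) → ℝ) (i : Fin d) :
    yc ⟨(i : ℕ), by omega⟩ x = x ⟨(i : ℕ) + d, by omega⟩ := by
  rw [yc, dif_pos (by simp only [Fin.val_mk]; exact i.isLt)]

lemma yc_hi (x : Fin (2 * d) → ℝ) (i : Fin d) :
    yc ⟨(i : ℕ) + d, by omega⟩ x = -(x ⟨(i : ℕ), by omega⟩) := by
  rw [yc, dif_neg (by simp only [Fin.val_mk]; omega)]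
  congr 2
  exact Fin.ext (by simp)

lemma sum_quad (x : Fin (2 * d) → ℝ) (C1 C2 C3 C4 : ℝ) :
    ∑ j, (C1 * x j ^ 2 + C2 * (x j * yc j x) + C3 * yc j x ^ 2 + C4)
      = (C1 + C3) * (∑ j, x j ^ 2) + 2 * d * C4 := by
  rw [sum_split (d := d) (fun j => C1 * x j ^ 2 + C2 * (x j * yc j x) + C3 * yc j x ^ 2 + C4),
    sum_split (d := d) (fun j => x j ^ 2)]
  rw [Finset.mul_sum]
  have hcard : ∑ _i : Fin d, (2 : ℝ) * C4 = 2 * d * C4 := by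
    rw [Finset.sum_const, Finset.card_univ, Fintype.card_fin]; push_cast; ring
  rw [show (2 : ℝ) * d * C4 = ∑ _i : Fin d, (2 : ℝ) * C4 from hcard.symm,
    ← Finset.sum_add_distrib]
  refine Finset.sum_congr rfl fun i _ => ?_
  rw [yc_lo, yc_hi]
  ring

lemma hder_rsq_x (x : Fin (2 * d) → ℝ) (t : ℝ) (j : Fin (2 * d)) :
    HasDerivAt (fun s => rsq (d := d) (Function.update x j s, t)) (2 * x j) (x j) := by
  have hfun : (fun s => rsq (d := d) (Function.update x j s, t))
      = fun s => s ^ 2 + ∑ k ∈ Finset.univ.erase j, x k ^ 2 := by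
    funext s
    rw [rsq, ← Finset.add_sum_erase _ _ (Finset.mem_univ j)]
    show Function.update x j s j ^ 2 + _ = _
    rw [Function.update_self]
    congr 1
    exact Finset.sum_congr rfl fun k hk => by
      show Function.update x j s k ^ 2 = _
      rw [Function.update_of_ne (Finset.ne_of_mem_erase hk)]
  rw [hfun]
  simpa using (hasDerivAt_pow 2 (x j)).add_const (∑ k ∈ Finset.univ.erase j, x k ^ 2)

lemma hder_rsq_t (x : Fin (2 * d) → ℝ) (t : ℝ) :
    HasDerivAt (fun s => rsq (d := d) (x, s)) 0 t :=
  hasDerivAt_const t (rsq (d := d) (x, t))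

lemma rsq_update_self (x : Fin (2 * d) → ℝ) (t : ℝ) (j : Fin (2 * d)) :
    rsq (d := d) (Function.update x j (x j), t) = rsq (x, t) := by
  rw [Function.update_eq_self]

lemma hder_Af_x (e : ℕ) (x : Fin (2 * d) → ℝ) (t : ℝ) (j : Fin (2 * d)) :
    HasDerivAt (fun s => Af (e + 1) (Function.update x j s, t))
      ((2 * (e : ℝ) + 2) * rsq (x, t) ^ (2 * e + 1) * (2 * x j)) (x j) := by
  have h := ((hder_rsq_x x t j).fun_pow (2 * (e + 1))).add_const (t ^ 2)
  have he : 2 * (e + 1) - 1 = 2 * e + 1 := by omega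
  have hfun : (fun s => Af (d := d) (e + 1) (Function.update x j s, t))
      = fun s => rsq (d := d) (Function.update x j s, t) ^ (2 * (e + 1)) + t ^ 2 := rfl
  rw [hfun]
  refine h.congr_deriv ?_
  symm
  rw [he]
  show _ = (2 * (e + 1) : ℕ) * rsq (Function.update x j (x j), t) ^ (2 * e + 1) * (2 * x j)
  rw [rsq_update_self]
  push_cast
  ring

lemma hder_Af_t (e : ℕ) (x : Fin (2 * d) → ℝ) (t : ℝ) :
    HasDerivAt (fun s => Af (e + 1) (x, s)) (2 * t) t := by
  have h := (hasDerivAt_pow 2 t).const_add (rsq (d := d) (x, t) ^ (2 * (e + 1)))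
  have hfun : (fun s => Af (d := d) (e + 1) (x, s))
      = fun s => rsq (d := d) (x, t) ^ (2 * (e + 1)) + s ^ 2 := rfl
  rw [hfun]
  simpa using h

lemma hder_NHG_x (e : ℕ) (x : Fin (2 * d) → ℝ) (t : ℝ) (j : Fin (2 * d))
    (hq : rsq (x, t) ≠ 0) :
    HasDerivAt (fun s => NHG (e + 1) (Function.update x j s, t))
      ((2 * (e : ℝ) + 2) * rsq (x, t) ^ (2 * e + 1) * (2 * x j) * al e
        * Af (e + 1) (x, t) ^ (al e - 1)) (x j) := by
  have hA : HasDerivAt (fun s => Af (e + 1) (Function.update x j s, t) ^ (al e))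
      ((2 * (e : ℝ) + 2) * rsq (x, t) ^ (2 * e + 1) * (2 * x j) * al e
        * Af (e + 1) (Function.update x j (x j), t) ^ (al e - 1)) (x j) :=
    (hder_Af_x e x t j).rpow_const (Or.inl (by
      rw [Function.update_eq_self]; exact (Af_pos e (x, t) hq).ne'))
  rw [Function.update_eq_self] at hA
  have hfun : (fun s => NHG (e + 1) (Function.update x j s, t))
      = fun s => Af (d := d) (e + 1) (Function.update x j s, t) ^ (al e) := by
    funext s; exact NHG_eq e _
  rw [hfun]
  exact hA

lemma hder_NHG_t (e : ℕ) (x : Fin (2 * d) → ℝ) (t : ℝ) (hq : rsq (x, t) ≠ 0) :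
    HasDerivAt (fun s => NHG (e + 1) (x, s))
      (2 * t * al e * Af (e + 1) (x, t) ^ (al e - 1)) t := by
  have hA : HasDerivAt (fun s => Af (e + 1) (x, s) ^ (al e))
      (2 * t * al e * Af (e + 1) (x, t) ^ (al e - 1)) t :=
    (hder_Af_t e x t).rpow_const (Or.inl (Af_pos e (x, t) hq).ne')
  have hfun : (fun s => NHG (e + 1) (x, s))
      = fun s => Af (d := d) (e + 1) (x, s) ^ (al e) := by
    funext s; exact NHG_eq e _
  rw [hfun]
  exact hA

lemma hasDerivAt_of_contDiffOn (f : ℝ → ℝ) (hf : ContDiffOn ℝ (⊤ : ℕ∞) f (Set.Ioi 0))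
    {y : ℝ} (hy : 0 < y) : HasDerivAt f (deriv f y) y :=
  ((hf.contDiffAt (isOpen_Ioi.mem_nhds hy)).differentiableAt (by simp)).hasDerivAt

lemma X_fN (e : ℕ) (f : ℝ → ℝ) (hf : ContDiffOn ℝ (⊤ : ℕ∞) f (Set.Ioi 0))
    (j : Fin (2 * d)) (q : (Fin (2 * d) → ℝ) × ℝ) (hq : rsq q ≠ 0) :
    XHG (e + 1) j (fun q' => f (NHG (e + 1) q')) q
      = deriv f (NHG (e + 1) q) * G e j q := by
  have hq' : rsq (q.1, q.2) ≠ 0 := hq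
  have hNpos : 0 < NHG (e + 1) q := NHG_pos e q hq
  have hfd : HasDerivAt f (deriv f (NHG (e + 1) q)) (NHG (e + 1) q) :=
    hasDerivAt_of_contDiffOn f hf hNpos
  have hNx := hder_NHG_x e q.1 q.2 j hq'
  have hNt := hder_NHG_t e q.1 q.2 hq'
  have hfdx : HasDerivAt f (deriv f (NHG (e + 1) q))
      ((fun s => NHG (e + 1) (Function.update q.1 j s, q.2)) (q.1 j)) := by
    simpa [Function.update_eq_self] using hfd
  have hfdt : HasDerivAt f (deriv f (NHG (e + 1) q))
      ((fun s => NHG (e + 1) (q.1, s)) q.2) := by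
    simpa using hfd
  have hx := hfdx.comp (q.1 j) hNx
  have ht := hfdt.comp q.2 hNt
  have hxd : deriv (fun s => f (NHG (e + 1) (Function.update q.1 j s, q.2))) (q.1 j)
      = deriv f (NHG (e + 1) q) * ((2 * (e : ℝ) + 2) * rsq (q.1, q.2) ^ (2 * e + 1)
        * (2 * q.1 j) * al e * Af (e + 1) (q.1, q.2) ^ (al e - 1)) := hx.deriv
  have htd : deriv (fun s => f (NHG (e + 1) (q.1, s))) q.2
      = deriv f (NHG (e + 1) q) * (2 * q.2 * al e * Af (e + 1) (q.1, q.2) ^ (al e - 1)) :=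
    ht.deriv
  show deriv (fun s => f (NHG (e + 1) (Function.update q.1 j s, q.2))) (q.1 j)
      + HGcoef (e + 1) j q * deriv (fun s => f (NHG (e + 1) (q.1, s))) q.2 = _
  rw [hxd, htd, HGcoef_eq, G]
  have he1 : ((e : ℝ) + 1) ≠ 0 := by positivity
  have hAq : Af (e + 1) (q.1, q.2) = Af (e + 1) q := rfl
  have hrq : rsq (q.1, q.2) = rsq q := rfl
  rw [hAq, hrq, al]
  field_simp
  ring

lemma hasDerivAt_deriv_of_contDiffOn (f : ℝ → ℝ) (hf : ContDiffOn ℝ (⊤ : ℕ∞) f (Set.Ioi 0))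
    {y : ℝ} (hy : 0 < y) : HasDerivAt (deriv f) (deriv (deriv f) y) y :=
  hasDerivAt_of_contDiffOn (deriv f) (hf.deriv_of_isOpen isOpen_Ioi (by simp)) hy

lemma keyX (e : ℕ) (f : ℝ → ℝ) (hf : ContDiffOn ℝ (⊤ : ℕ∞) f (Set.Ioi 0))
    (j : Fin (2 * d)) (p : (Fin (2 * d) → ℝ) × ℝ) (hp : rsq p ≠ 0) :
    XHG (e + 1) j (XHG (e + 1) j (fun q' => f (NHG (e + 1) q'))) p
      = deriv (deriv f) (NHG (e + 1) p) * (G e j p) ^ 2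
        + deriv f (NHG (e + 1) p) *
          ( (4 * ((e : ℝ) + 1) * (al e - 1)) * Af (e + 1) p ^ (al e - 2) * rsq p ^ (2 * e)
              * (p.1 j * rsq p ^ (e + 1) + yc j p.1 * p.2) ^ 2
            + Af (e + 1) p ^ (al e - 1) *
              ( rsq p ^ (2 * e + 1) + 2 * ((e : ℝ) + 1) * p.1 j ^ 2 * rsq p ^ (2 * e)
                + 2 * (e : ℝ) * p.1 j ^ 2 * (rsq p ^ (e - 1) * rsq p ^ (e + 1))
                + 2 * (e : ℝ) * p.1 j * yc j p.1 * p.2 * rsq p ^ (e - 1)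
                + 2 * ((e : ℝ) + 1) * yc j p.1 ^ 2 * rsq p ^ (2 * e) ) ) := by
  obtain ⟨x, t⟩ := p
  simp only at *
  have hp' : rsq (x, t) ≠ 0 := hp
  have hNpos : 0 < NHG (e + 1) (x, t) := NHG_pos e (x, t) hp
  set u : (Fin (2 * d) → ℝ) × ℝ → ℝ := fun q' => f (NHG (e + 1) q') with hu
  -- x-path derivative of X u
  have hxev : (fun s => XHG (e + 1) j u (Function.update x j s, t))
      =ᶠ[nhds (x j)] (fun s => deriv f (NHG (e + 1) (Function.update x j s, t))
        * G e j (Function.update x j s, t)) := by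
    have hc : ContinuousAt (fun s => rsq (d := d) (Function.update x j s, t)) (x j) :=
      (hder_rsq_x x t j).continuousAt
    have hne : ∀ᶠ s in nhds (x j), rsq (d := d) (Function.update x j s, t) ≠ 0 := by
      apply hc.eventually_ne
      rw [Function.update_eq_self]
      exact hp
    filter_upwards [hne] with s hs
    exact X_fN e f hf j (Function.update x j s, t) hs
  have htev : (fun s => XHG (e + 1) j u (x, s))
      = (fun s => deriv f (NHG (e + 1) (x, s)) * G e j (x, s)) := by
    funext s
    exact X_fN e f hf j (x, s) hp
  -- abbreviations
  have hfd2 : HasDerivAt (deriv f) (deriv (deriv f) (NHG (e + 1) (x, t))) (NHG (e + 1) (x, t)) :=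
    hasDerivAt_deriv_of_contDiffOn f hf hNpos
  -- x-path HasDerivAt for deriv f ∘ N
  have hNx := hder_NHG_x e x t j hp'
  have hfd2x : HasDerivAt (deriv f) (deriv (deriv f) (NHG (e + 1) (x, t)))
      ((fun s => NHG (e + 1) (Function.update x j s, t)) (x j)) := by
    simpa [Function.update_eq_self] using hfd2
  have h1x := hfd2x.comp (x j) hNx
  -- x-path HasDerivAt for G
  have h2x0 := (hder_Af_x e x t j).rpow_const (p := al e - 1)
    (Or.inl (by rw [Function.update_eq_self]; exact (Af_pos e (x, t) hp).ne'))
  have h2x : HasDerivAt (fun s => Af (d := d) (e + 1) (Function.update x j s, t) ^ (al e - 1))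
      ((2 * (e : ℝ) + 2) * rsq (x, t) ^ (2 * e + 1) * (2 * x j) * (al e - 1)
        * Af (e + 1) (x, t) ^ (al e - 2)) (x j) := by
    have he : al e - 1 - 1 = al e - 2 := by ring
    simpa [Function.update_eq_self, he] using h2x0
  have h3x : HasDerivAt (fun s => rsq (d := d) (Function.update x j s, t) ^ e)
      ((e : ℝ) * rsq (x, t) ^ (e - 1) * (2 * x j)) (x j) := by
    simpa [Function.update_eq_self] using (hder_rsq_x x t j).fun_pow e
  have h4x : HasDerivAt (fun s => s * rsq (d := d) (Function.update x j s, t) ^ (e + 1)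
        + yc j x * t)
      (1 * rsq (x, t) ^ (e + 1)
        + x j * (((e : ℝ) + 1) * rsq (x, t) ^ e * (2 * x j))) (x j) := by
    have := ((hasDerivAt_id (x j)).mul ((hder_rsq_x x t j).pow (e + 1))).add_const (yc j x * t)
    simpa [Function.update_eq_self] using this
  have hGx := (h2x.fun_mul h3x).fun_mul h4x
  have hFx := h1x.fun_mul hGx
  -- rewrite x-path function of F
  have hGfunx : (fun s => deriv f (NHG (e + 1) (Function.update x j s, t))
        * G e j (Function.update x j s, t))
      = fun s => (deriv f ∘ fun s => NHG (e + 1) (Function.update x j s, t)) s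
        * ((Af (d := d) (e + 1) (Function.update x j s, t) ^ (al e - 1)
            * rsq (d := d) (Function.update x j s, t) ^ e)
          * (s * rsq (d := d) (Function.update x j s, t) ^ (e + 1) + yc j x * t)) := by
    funext s
    rw [G]
    simp only [Function.comp_apply, Function.update_self, yc_update]
  have hxderiv : deriv (fun s => XHG (e + 1) j u (Function.update x j s, t)) (x j)
      = deriv (deriv f) (NHG (e + 1) (x, t))
          * ((2 * (e : ℝ) + 2) * rsq (x, t) ^ (2 * e + 1) * (2 * x j) * al e
            * Af (e + 1) (x, t) ^ (al e - 1))
          * (Af (e + 1) (x, t) ^ (al e - 1) * rsq (x, t) ^ e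
            * (x j * rsq (x, t) ^ (e + 1) + yc j x * t))
        + deriv f (NHG (e + 1) (x, t))
          * (((2 * (e : ℝ) + 2) * rsq (x, t) ^ (2 * e + 1) * (2 * x j) * (al e - 1)
                * Af (e + 1) (x, t) ^ (al e - 2) * rsq (x, t) ^ e
              + Af (e + 1) (x, t) ^ (al e - 1)
                * ((e : ℝ) * rsq (x, t) ^ (e - 1) * (2 * x j)))
              * (x j * rsq (x, t) ^ (e + 1) + yc j x * t)
            + Af (e + 1) (x, t) ^ (al e - 1) * rsq (x, t) ^ e
              * (1 * rsq (x, t) ^ (e + 1)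
                + x j * (((e : ℝ) + 1) * rsq (x, t) ^ e * (2 * x j)))) := by
    rw [hxev.deriv_eq, hGfunx]
    have := hFx.deriv
    simp only [Function.update_eq_self] at this ⊢
    convert this using 2 <;> simp [Function.update_eq_self]
  -- t-path
  have hNt := hder_NHG_t e x t hp'
  have hfd2t : HasDerivAt (deriv f) (deriv (deriv f) (NHG (e + 1) (x, t)))
      ((fun s => NHG (e + 1) (x, s)) t) := by simpa using hfd2
  have h1t := hfd2t.comp t hNt
  have h2t : HasDerivAt (fun s => Af (d := d) (e + 1) (x, s) ^ (al e - 1))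
      (2 * t * (al e - 1) * Af (e + 1) (x, t) ^ (al e - 2)) t := by
    have he : al e - 1 - 1 = al e - 2 := by ring
    simpa [he] using (hder_Af_t e x t).rpow_const (p := al e - 1)
      (Or.inl (Af_pos e (x, t) hp).ne')
  have h4t : HasDerivAt (fun s => x j * rsq (d := d) (x, t) ^ (e + 1) + yc j x * s)
      (yc j x) t := by
    simpa using ((hasDerivAt_id t).const_mul (yc j x)).const_add
      (x j * rsq (d := d) (x, t) ^ (e + 1))
  have hGt := (h2t.mul_const (rsq (d := d) (x, t) ^ e)).fun_mul h4t
  have hFt := h1t.fun_mul hGt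
  have hGfunt : (fun s => deriv f (NHG (e + 1) (x, s)) * G e j (x, s))
      = fun s => (deriv f ∘ fun s => NHG (e + 1) (x, s)) s
        * ((Af (d := d) (e + 1) (x, s) ^ (al e - 1) * rsq (d := d) (x, t) ^ e)
          * (x j * rsq (d := d) (x, t) ^ (e + 1) + yc j x * s)) := by
    funext s
    rw [G]
    simp only [Function.comp_apply]
    rfl
  have htderiv : deriv (fun s => XHG (e + 1) j u (x, s)) t
      = deriv (deriv f) (NHG (e + 1) (x, t))
          * (2 * t * al e * Af (e + 1) (x, t) ^ (al e - 1))
          * (Af (e + 1) (x, t) ^ (al e - 1) * rsq (x, t) ^ e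
            * (x j * rsq (x, t) ^ (e + 1) + yc j x * t))
        + deriv f (NHG (e + 1) (x, t))
          * ((2 * t * (al e - 1) * Af (e + 1) (x, t) ^ (al e - 2) * rsq (x, t) ^ e)
              * (x j * rsq (x, t) ^ (e + 1) + yc j x * t)
            + Af (e + 1) (x, t) ^ (al e - 1) * rsq (x, t) ^ e * yc j x) := by
    rw [htev, hGfunt]
    have := hFt.deriv
    convert this using 2 <;> simp [G]
  -- assemble
  show deriv (fun s => XHG (e + 1) j u (Function.update x j s, t)) (x j)
      + HGcoef (e + 1) j (x, t) * deriv (fun s => XHG (e + 1) j u (x, s)) t = _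
  rw [hxderiv, htderiv, HGcoef_eq, G]
  have he1 : ((e : ℝ) + 1) ≠ 0 := by positivity
  rw [al]
  field_simp
  ring

lemma main1 (e : ℕ) (f : ℝ → ℝ) (hf : ContDiffOn ℝ (⊤ : ℕ∞) f (Set.Ioi 0))
    (p : (Fin (2 * d) → ℝ) × ℝ) (hp : rsq p ≠ 0) :
    DeltaHG (e + 1) (fun q => f (NHG (e + 1) q)) p
      = rHG p ^ (2 * (2 * (e + 1) - 1)) / NHG (e + 1) p ^ (2 * (2 * (e + 1) - 1))
        * (deriv (deriv f) (NHG (e + 1) p)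
          + ((2 * (d : ℝ) + 2 * ((e + 1 : ℕ) : ℝ)) - 1) / NHG (e + 1) p
            * deriv f (NHG (e + 1) p)) := by
  have hApos := Af_pos e p hp
  have hnpos := NHG_pos e p hp
  have he1 : ((e : ℝ) + 1) ≠ 0 := by positivity
  have hsum : ∀ j : Fin (2 * d),
      XHG (e + 1) j (XHG (e + 1) j (fun q' => f (NHG (e + 1) q'))) p
        = ((deriv (deriv f) (NHG (e + 1) p) * (Af (e + 1) p ^ (al e - 1)) ^ 2
              + deriv f (NHG (e + 1) p) * (4 * ((e : ℝ) + 1) * (al e - 1))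
                * Af (e + 1) p ^ (al e - 2)) * (rsq p ^ (2 * e) * rsq p ^ (2 * e + 2))
            + deriv f (NHG (e + 1) p) * Af (e + 1) p ^ (al e - 1)
              * (2 * ((e : ℝ) + 1) * rsq p ^ (2 * e)
                + 2 * ((e : ℝ) * (rsq p ^ (e - 1) * rsq p ^ (e + 1))))) * p.1 j ^ 2
          + ((deriv (deriv f) (NHG (e + 1) p) * (Af (e + 1) p ^ (al e - 1)) ^ 2
              + deriv f (NHG (e + 1) p) * (4 * ((e : ℝ) + 1) * (al e - 1))
                * Af (e + 1) p ^ (al e - 2)) * (rsq p ^ (2 * e) * (2 * rsq p ^ (e + 1) * p.2))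
            + deriv f (NHG (e + 1) p) * Af (e + 1) p ^ (al e - 1)
              * (2 * (e : ℝ) * p.2 * rsq p ^ (e - 1))) * (p.1 j * yc j p.1)
          + ((deriv (deriv f) (NHG (e + 1) p) * (Af (e + 1) p ^ (al e - 1)) ^ 2
              + deriv f (NHG (e + 1) p) * (4 * ((e : ℝ) + 1) * (al e - 1))
                * Af (e + 1) p ^ (al e - 2)) * (rsq p ^ (2 * e) * p.2 ^ 2)
            + deriv f (NHG (e + 1) p) * Af (e + 1) p ^ (al e - 1)
              * (2 * ((e : ℝ) + 1) * rsq p ^ (2 * e))) * yc j p.1 ^ 2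
          + deriv f (NHG (e + 1) p) * Af (e + 1) p ^ (al e - 1) * rsq p ^ (2 * e + 1) := by
    intro j
    rw [keyX e f hf j p hp, G]
    ring
  rw [show DeltaHG (e + 1) (fun q => f (NHG (e + 1) q)) p
      = ∑ j, XHG (e + 1) j (XHG (e + 1) j (fun q' => f (NHG (e + 1) q'))) p from rfl]
  rw [Finset.sum_congr rfl (fun j _ => hsum j), sum_quad]
  rw [show (∑ j, p.1 j ^ 2 : ℝ) = rsq p from rfl]
  have hsub : ((e : ℝ)) * (rsq p ^ (e - 1) * rsq p ^ (e + 1)) = (e : ℝ) * rsq p ^ (2 * e) := by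
    cases e with
    | zero => simp
    | succ k =>
        rw [← pow_add, show (k + 1 - 1) + (k + 1 + 1) = 2 * (k + 1) from by omega]
  rw [hsub]
  rw [show 2 * (2 * (e + 1) - 1) = 2 * (2 * e + 1) from by omega, rHG_pow_even]
  have hP1 : Af (e + 1) p ^ (al e - 1) = NHG (e + 1) p / Af (e + 1) p := by
    rw [Real.rpow_sub hApos, Real.rpow_one, NHG_eq]
  have hP2 : Af (e + 1) p ^ (al e - 2) = NHG (e + 1) p / Af (e + 1) p ^ 2 := by
    rw [Real.rpow_sub hApos, NHG_eq, Real.rpow_two]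
  have hAn : NHG (e + 1) p ^ (4 * e + 4) = Af (e + 1) p := by
    rw [NHG_eq, ← Real.rpow_natCast (Af (e + 1) p ^ al e) (4 * e + 4),
      ← Real.rpow_mul hApos.le,
      show al e * ((4 * e + 4 : ℕ) : ℝ) = 1 from by rw [al]; push_cast; field_simp,
      Real.rpow_one]
  have hAf : Af (e + 1) p = rsq p ^ (2 * e + 2) + p.2 ^ 2 := by
    rw [Af, show 2 * (e + 1) = 2 * e + 2 from by omega]
  have ht2 : p.2 ^ 2 = NHG (e + 1) p ^ (4 * e + 4) - rsq p ^ (2 * e + 2) := by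
    rw [hAn, hAf]; ring
  rw [hP1, hP2, ht2, ← hAn, al]
  push_cast
  field_simp
  ring

end S18

/-- for smooth `f : (0,∞) → ℝ`, at points with `N ≠ 0`, `r ≠ 0`,
`Δ_𝒳 f(N) = (r^{2(2δ-1)}/N^{2(2δ-1)})(f''(N) + ((Q-1)/N) f'(N))` with `Q = 2d + 2δ`;
in particular `Δ_𝒳 (N^{2-Q}) = 0` away from the center set. -/
theorem stmt18 (d δ : ℕ) (hd : 0 < d) (hδ : 1 ≤ δ)
    (f : ℝ → ℝ) (hf : ContDiffOn ℝ (⊤ : ℕ∞) f (Set.Ioi 0))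
    (p : (Fin (2 * d) → ℝ) × ℝ) (hr : rHG p ≠ 0) (hN : NHG δ p ≠ 0) :
    DeltaHG δ (fun q => f (NHG δ q)) p
      = rHG p ^ (2 * (2 * δ - 1)) / NHG δ p ^ (2 * (2 * δ - 1))
        * (deriv (deriv f) (NHG δ p)
          + ((2 * (d : ℝ) + 2 * (δ : ℝ)) - 1) / NHG δ p * deriv f (NHG δ p)) ∧
    DeltaHG δ (fun q => NHG δ q ^ ((2 : ℝ) - (2 * (d : ℝ) + 2 * (δ : ℝ)))) p = 0 := by
  obtain ⟨e, rfl⟩ : ∃ e, δ = e + 1 := ⟨δ - 1, by omega⟩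
  have hp : S18.rsq p ≠ 0 := fun h =>
    hr (by rw [show rHG p = Real.sqrt (S18.rsq p) from rfl, h, Real.sqrt_zero])
  have hn : 0 < NHG (e + 1) p := S18.NHG_pos e p hp
  constructor
  · exact S18.main1 e f hf p hp
  · set c : ℝ := (2 : ℝ) - (2 * (d : ℝ) + 2 * ((e + 1 : ℕ) : ℝ)) with hc
    have hf2 : ContDiffOn ℝ (⊤ : ℕ∞) (fun y : ℝ => y ^ c) (Set.Ioi 0) := fun y hy =>
      (Real.contDiffAt_rpow_const_of_ne (ne_of_gt hy)).contDiffWithinAt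
    have h := S18.main1 e (fun y : ℝ => y ^ c) hf2 p hp
    have h1 : deriv (fun y : ℝ => y ^ c) (NHG (e + 1) p) = c * NHG (e + 1) p ^ (c - 1) :=
      (Real.hasDerivAt_rpow_const (Or.inl hn.ne')).deriv
    have hev : deriv (fun y : ℝ => y ^ c) =ᶠ[nhds (NHG (e + 1) p)]
        fun y => c * y ^ (c - 1) := by
      filter_upwards [eventually_ne_nhds hn.ne'] with y hy
      exact (Real.hasDerivAt_rpow_const (Or.inl hy)).deriv
    have h2 : deriv (deriv (fun y : ℝ => y ^ c)) (NHG (e + 1) p)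
        = c * ((c - 1) * NHG (e + 1) p ^ (c - 1 - 1)) := by
      rw [hev.deriv_eq]
      exact ((Real.hasDerivAt_rpow_const (Or.inl hn.ne')).const_mul c).deriv
    rw [h, h1, h2, Real.rpow_sub_one hn.ne' (c - 1)]
    have : c * ((c - 1) * (NHG (e + 1) p ^ (c - 1) / NHG (e + 1) p))
        + ((2 * (d : ℝ) + 2 * ((e + 1 : ℕ) : ℝ)) - 1) / NHG (e + 1) p
          * (c * NHG (e + 1) p ^ (c - 1)) = 0 := by
      rw [hc]
      field_simp
      ring
    rw [this, mul_zero]
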